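/- For every fixed positive integer n, lim_{k→∞} p^(k+1)_n / p^(k)_n = ∞; consequently the ratio set of P^T_n = { p^(k)_n : k ≥ 1 } has no accumulation points in (0, ∞), and in particular is not dense in ℝ⁺. -/

import Mathlib

open Filter Topology

/-- `pseq n` is the `n`-th prime number, with `pseq 1 = 2`. -/
noncomputable def pseq (n : ℕ) : ℕ := Nat.nth Nat.Prime (n - 1)

/-- `pk k n = p^(k)_n`: the `k`-fold iterate of `n ↦ p_n` applied to `n`. -/
noncomputable def pk (k n : ℕ) : ℕ := pseq^[k] n

/-!
By Chebyshev's bound `π x = O(x / log x)` the primes have density zero, so `p_m / m → ∞`;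
since the iterates `p^(k)_n` tend to infinity, the ratios of consecutive iterates blow up.
For an increasing positive sequence `a` with `a (k+1) / a k → ∞`, a ratio `a j / a l` with
`l < j` is at least both `a (l+1) / a l` and `a j / a (j-1)`, so only finitely many ratios other
than `1` lie in a compact interval `[c, C] ⊆ (0, ∞)`. The ratio set is therefore discrete in
`(0, ∞)`, and as it consists of rationals, `√2` is not in its closure.
-/

open Set

theorem Nat.primeCounting_nth_prime (m : ℕ) : Nat.primeCounting (Nat.nth Nat.Prime m) = m + 1 :=
  Nat.count_nth_succ_of_infinite Nat.infinite_setOfPred_prime m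

theorem Nat.tendsto_nth_prime_div_atTop :
    Tendsto (fun m : ℕ => (Nat.nth Nat.Prime m : ℝ) / (m + 1)) atTop atTop := by
  set c : ℝ := Real.log 4 + 1
  have hc : 0 < c := by positivity
  have hp : Tendsto (fun m : ℕ => (Nat.nth Nat.Prime m : ℝ)) atTop atTop :=
    tendsto_natCast_atTop_atTop.comp (Nat.nth_strictMono Nat.infinite_setOfPred_prime).tendsto_atTop
  -- Chebyshev: `π x ≤ c x / log x`, and `π (p_m) = m + 1`.
  refine tendsto_atTop_mono' atTop ?_ ((Real.tendsto_log_atTop.comp hp).atTop_div_const hc)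
  filter_upwards [hp.eventually (Chebyshev.eventually_primeCounting_le one_pos),
    hp.eventually (eventually_gt_atTop 1)] with m hcheb hgt
  simp only [Function.comp_apply, Nat.floor_natCast, Nat.primeCounting_nth_prime] at hcheb ⊢
  have hlog : 0 < Real.log (Nat.nth Nat.Prime m) := Real.log_pos hgt
  rw [div_le_div_iff₀ hc (by positivity)]
  rw [le_div_iff₀ hlog] at hcheb
  push_cast at hcheb
  linarith

theorem tendsto_pseq_div_atTop : Tendsto (fun m : ℕ => (pseq m : ℝ) / m) atTop atTop := by
  rw [← tendsto_add_atTop_iff_nat 1]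
  simpa [pseq] using Nat.tendsto_nth_prime_div_atTop

theorem lt_pseq (m : ℕ) : m < pseq m := by
  have := Nat.add_two_le_nth_prime (m - 1)
  unfold pseq
  omega

theorem pk_succ (k n : ℕ) : pk (k + 1) n = pseq (pk k n) :=
  Function.iterate_succ_apply' pseq k n

theorem strictMono_pk (n : ℕ) : StrictMono (pk · n) :=
  strictMono_nat_of_lt_succ fun k => (pk_succ k n).symm ▸ lt_pseq (pk k n)

theorem le_pk (k n : ℕ) : k ≤ pk k n :=
  (strictMono_pk n).le_apply

section RatioSet

variable {a : ℕ → ℝ}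

theorem exists_index_bound_of_le_mul (hpos : ∀ k, 0 < a k) (hmono : Monotone a)
    (hratio : Tendsto (fun k => a (k + 1) / a k) atTop atTop) (C : ℝ) :
    ∃ K, ∀ j l, l < j → a j ≤ C * a l → j ≤ K := by
  obtain ⟨K, hK⟩ := eventually_atTop.1 (hratio.eventually_gt_atTop C)
  refine ⟨K, fun j l hlj hjl => ?_⟩
  obtain ⟨m, rfl⟩ : ∃ m, j = m + 1 := ⟨j - 1, by omega⟩
  -- Otherwise `C * a l ≤ C * a m < a (m + 1)`.
  by_contra! hKm
  have hC : 0 ≤ C := nonneg_of_mul_nonneg_left ((hpos _).le.trans hjl) (hpos l)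
  have := (lt_div_iff₀ (hpos m)).1 (hK m (by omega))
  nlinarith [hmono (Nat.le_of_lt_succ hlj)]

theorem finite_ratios_inter_Icc (hpos : ∀ k, 0 < a k) (hmono : Monotone a)
    (hratio : Tendsto (fun k => a (k + 1) / a k) atTop atTop) {c : ℝ} (hc : 0 < c) (C : ℝ) :
    (range (fun p : ℕ × ℕ => a p.1 / a p.2) ∩ Icc c C).Finite := by
  obtain ⟨K₁, hK₁⟩ := exists_index_bound_of_le_mul hpos hmono hratio C
  obtain ⟨K₂, hK₂⟩ := exists_index_bound_of_le_mul hpos hmono hratio c⁻¹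
  set K := max K₁ K₂
  refine (((finite_Iic K).prod (finite_Iic K)).image
    (fun p : ℕ × ℕ => a p.1 / a p.2)).insert 1 |>.subset ?_
  rintro _ ⟨⟨⟨j, l⟩, rfl⟩, hlow, hupp⟩
  rcases lt_trichotomy l j with hlj | rfl | hjl
  · have := hK₁ j l hlj ((div_le_iff₀ (hpos l)).1 hupp)
    exact Or.inr ⟨(j, l), ⟨mem_Iic.2 (by omega), mem_Iic.2 (by omega)⟩, rfl⟩
  · exact Or.inl (div_self (hpos l).ne')
  · have := hK₂ l j hjl (by
      rw [le_div_iff₀ (hpos l)] at hlow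
      rw [inv_mul_eq_div, le_div_iff₀ hc]
      linarith)
    exact Or.inr ⟨(j, l), ⟨mem_Iic.2 (by omega), mem_Iic.2 (by omega)⟩, rfl⟩

theorem not_accPt_ratios (hpos : ∀ k, 0 < a k) (hmono : Monotone a)
    (hratio : Tendsto (fun k => a (k + 1) / a k) atTop atTop) {x : ℝ} (hx : 0 < x) :
    ¬AccPt x (𝓟 (range (fun p : ℕ × ℕ => a p.1 / a p.2))) := fun hacc =>
  have hU : Icc (x / 2) (2 * x) ∈ 𝓝 x := Icc_mem_nhds (by linarith) (by linarith)
  Set.Infinite.of_accPt (hacc.nhds_inter hU)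
    (inter_comm _ _ ▸ finite_ratios_inter_Icc hpos hmono hratio (by positivity) _)

end RatioSet

theorem notMem_closure_of_not_accPt {X : Type*} [TopologicalSpace X] {s : Set X} {x : X}
    (hacc : ¬AccPt x (𝓟 s)) (hx : x ∉ s) : x ∉ closure s := by
  rwa [mem_closure_iff_clusterPt, ← sdiff_singleton_eq_self hx, ← accPt_principal_iff_clusterPt]

theorem iterated_prime_column_ratio_sparse_general (n : ℕ) :
    Tendsto (fun k : ℕ => (pk (k + 1) n : ℝ) / (pk k n : ℝ)) atTop atTop ∧
    (∀ x : ℝ, 0 < x →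
      ¬ AccPt x (𝓟 {r : ℝ | ∃ j l : ℕ, 1 ≤ j ∧ 1 ≤ l ∧ r = (pk j n : ℝ) / (pk l n : ℝ)})) ∧
    ¬ (∀ y : ℝ, 0 < y →
        y ∈ closure {r : ℝ | ∃ j l : ℕ, 1 ≤ j ∧ 1 ≤ l ∧ r = (pk j n : ℝ) / (pk l n : ℝ)}) := by
  have hratio : Tendsto (fun k : ℕ => (pk (k + 1) n : ℝ) / (pk k n : ℝ)) atTop atTop := by
    simp only [pk_succ]
    exact tendsto_pseq_div_atTop.comp (tendsto_atTop_mono (le_pk · n) tendsto_id)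
  -- Shifting by one makes every term positive.
  set b : ℕ → ℝ := fun k => pk (k + 1) n
  have hS : {r : ℝ | ∃ j l : ℕ, 1 ≤ j ∧ 1 ≤ l ∧ r = (pk j n : ℝ) / (pk l n : ℝ)} =
      range (fun p : ℕ × ℕ => b p.1 / b p.2) := by
    ext r
    constructor
    · rintro ⟨j, l, hj, hl, rfl⟩
      exact ⟨(j - 1, l - 1), by simp only [b, Nat.sub_add_cancel hj, Nat.sub_add_cancel hl]⟩
    · rintro ⟨⟨j, l⟩, rfl⟩
      exact ⟨j + 1, l + 1, by omega, by omega, rfl⟩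
  have hpos : ∀ k, 0 < b k := fun k => Nat.cast_pos.2 ((Nat.succ_pos k).trans_le (le_pk _ n))
  have hmono : Monotone b := fun i j hij => Nat.cast_le.2 ((strictMono_pk n).monotone (by omega))
  have hacc : ∀ x : ℝ, 0 < x → ¬AccPt x (𝓟 (range fun p : ℕ × ℕ => b p.1 / b p.2)) :=
    fun _ => not_accPt_ratios hpos hmono ((tendsto_add_atTop_iff_nat 1).2 hratio)
  rw [hS]
  refine ⟨hratio, hacc, fun hdense => ?_⟩
  have hsqrt : √2 ∉ range (fun p : ℕ × ℕ => b p.1 / b p.2) := by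
    rintro ⟨⟨j, l⟩, h⟩
    exact irrational_sqrt_two ⟨(pk (j + 1) n : ℚ) / (pk (l + 1) n : ℚ), by push_cast; exact h⟩
  exact notMem_closure_of_not_accPt (hacc √2 (by positivity)) hsqrt (hdense √2 (by positivity))

theorem iterated_prime_column_ratio_sparse (n : ℕ) (hn : 1 ≤ n) :
    Tendsto (fun k : ℕ => (pk (k + 1) n : ℝ) / (pk k n : ℝ)) atTop atTop ∧
    (∀ x : ℝ, 0 < x →
      ¬ AccPt x (𝓟 {r : ℝ | ∃ j l : ℕ, 1 ≤ j ∧ 1 ≤ l ∧ r = (pk j n : ℝ) / (pk l n : ℝ)})) ∧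
    ¬ (∀ y : ℝ, 0 < y →
        y ∈ closure {r : ℝ | ∃ j l : ℕ, 1 ≤ j ∧ 1 ≤ l ∧ r = (pk j n : ℝ) / (pk l n : ℝ)}) :=
  iterated_prime_column_ratio_sparse_general n
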